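/- Metasubstitution Lemma I (associativity of metasubstitution): given terms Θ ▹ Γ, x⃗ᵢ ⊢ rᵢ (1 ≤ i ≤ k), Θ ▹ Γ, y⃗ⱼ ⊢ sⱼ (1 ≤ j ≤ l), and 𝕞₁:[m₁],…,𝕞_k:[m_k], 𝕟₁:[n₁],…,𝕟_l:[n_l] ▹ Γ ⊢ t, one has the equality of terms in context Θ ▹ Γ: t{𝕞ᵢ := (x⃗ᵢ)rᵢ}_{i∈[k]}{𝕟ⱼ := (y⃗ⱼ)sⱼ}_{j∈[l]} = t{𝕟ⱼ := (y⃗ⱼ)sⱼ}_{j∈[l]}{𝕞ᵢ := (x⃗ᵢ)(rᵢ{𝕟ⱼ := (y⃗ⱼ)sⱼ}_{j∈[l]})}_{i∈[k]}. -/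

import Mathlib

/-! ## Second-order syntax (de Bruijn representation)

An arity/sequence `(m₁,…,m_k) ∈ ℕ*` is a `Ctxa`.  A second-order signature is a set of
operators with such arities.  Terms in a metavariable context (given by a type `M` of
metavariables with meta-arities `mar : M → ℕ`) and a variable context of size `n` are
generated by variables, metavariables applied to their parameters, and operators binding
variables in their arguments.  Working with de Bruijn indices gives terms up to
α-equivalence. -/

/-- A finite sequence `(m₁,…,m_k)` of natural numbers (an element of ℕ*). -/
structure Ctxa where
  len : ℕ
  ar : Fin len → ℕ

/-- A second-order signature: a set of operators with arities `(n₁,…,n_k) ∈ ℕ*`;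
an operator of arity `(n₁,…,n_k)` takes `k` arguments and binds `nᵢ` variables in the
`i`-th argument. -/
structure SOSig : Type 1 where
  Op : Type
  arity : Op → Ctxa

namespace SO

/-- Second-order terms over the signature `S`, in metavariable context `(M, mar)` and
variable context of size `n` (variables are de Bruijn indices `Fin n`, so terms are
automatically identified up to α-equivalence). -/
inductive Term (S : SOSig) (M : Type) (mar : M → ℕ) : ℕ → Type
  | var {n : ℕ} : Fin n → Term S M mar n
  | mvar {n : ℕ} (m : M) (ts : Fin (mar m) → Term S M mar n) : Term S M mar n
  | op {n : ℕ} (o : S.Op)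
      (ts : ∀ i : Fin (S.arity o).len, Term S M mar (n + (S.arity o).ar i)) :
      Term S M mar n

namespace Term

variable {S : SOSig} {M M' : Type} {mar : M → ℕ} {mar' : M' → ℕ}

/-- Cast a term along an equality of variable-context sizes. -/
def castCtx {n n' : ℕ} (h : n = n') (t : Term S M mar n) : Term S M mar n' := h ▸ t

/-- Extend a renaming to a context enlarged by `p` bound variables. -/
def extRen {n n' : ℕ} (ρ : Fin n → Fin n') (p : ℕ) : Fin (n + p) → Fin (n' + p) :=
  Fin.addCases (fun j => Fin.castAdd p (ρ j)) (fun j => Fin.natAdd n' j)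

/-- Renaming of variables. -/
def rename : ∀ {n n' : ℕ}, Term S M mar n → (Fin n → Fin n') → Term S M mar n'
  | _, _, .var x, ρ => .var (ρ x)
  | _, _, .mvar m ts, ρ => .mvar m (fun j => rename (ts j) ρ)
  | _, _, .op o ts, ρ => .op o (fun i => rename (ts i) (extRen ρ _))

/-- Weakening of a term by `p` fresh variables (added at the end of the context). -/
def weaken {n : ℕ} (p : ℕ) (t : Term S M mar n) : Term S M mar (n + p) :=
  rename t (Fin.castAdd p)

/-- Extend a simultaneous substitution to a context enlarged by `p` bound variables
(the bound variables are mapped to themselves). -/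
def extSub {n n' : ℕ} (σ : Fin n → Term S M mar n') (p : ℕ) :
    Fin (n + p) → Term S M mar (n' + p) :=
  Fin.addCases (fun j => weaken p (σ j)) (fun j => .var (Fin.natAdd n' j))

/-- Capture-avoiding simultaneous substitution `t{xᵢ := σ(i)}` of terms for variables. -/
def subst : ∀ {n n' : ℕ}, Term S M mar n → (Fin n → Term S M mar n') → Term S M mar n'
  | _, _, .var x, σ => σ x
  | _, _, .mvar m ts, σ => .mvar m (fun j => subst (ts j) σ)
  | _, _, .op o ts, σ => .op o (fun i => subst (ts i) (extSub σ _))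

/-- The renaming inserting `p` fresh variables in the middle of a context `n' + a`
(between the first `n'` variables and the last `a` bound ones). -/
def midWeak (n' p a : ℕ) : Fin (n' + a) → Fin (n' + p + a) :=
  Fin.addCases (fun j => Fin.castAdd a (Fin.castAdd p j)) (fun j => Fin.natAdd (n' + p) j)

/-- Metasubstitution `t{𝕞 := (x⃗_𝕞)s(𝕞)}` (simultaneously renaming the variables of `t`
along `ρ`): each metavariable `𝕞` of meta-arity `mar 𝕞` is replaced by the term
`s 𝕞`, which lives in the target context extended by `mar 𝕞` abstracted variables;
the parameters of `𝕞` are substituted for those abstracted variables. -/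
def msubst : ∀ {n n' : ℕ}, Term S M mar n → (Fin n → Fin n') →
    (∀ m : M, Term S M' mar' (n' + mar m)) → Term S M' mar' n'
  | _, _, .var x, ρ, _ => .var (ρ x)
  | _, _, .mvar m ts, ρ, s =>
      subst (s m) (Fin.addCases (fun j => .var j) (fun j => msubst (ts j) ρ s))
  | _, _, .op o ts, ρ, s =>
      .op o (fun i => msubst (ts i) (extRen ρ _) (fun m => rename (s m) (midWeak _ _ _)))

end Term

end SO
namespace SO
namespace Term
/-- The generic expansion `𝕞[x₁,…,x_{mar 𝕞}]` of a metavariable, in a context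
`g + mar 𝕞` whose last `mar 𝕞` variables are the parameters. -/
def genMvar {S : SOSig} {M : Type} {mar : M → ℕ} (g : ℕ) (m : M) :
    Term S M mar (g + mar m) :=
  .mvar m (fun v => .var (Fin.natAdd g v))
end Term
end SO
/-- Dependent case analysis on a sum type (used to split a concatenated
metavariable context). -/
def sumElim' {α β : Type} {f : α ⊕ β → Sort*} (l : ∀ a, f (.inl a)) (r : ∀ b, f (.inr b)) :
    ∀ x, f x
  | .inl a => l a
  | .inr b => r b

/-! Metasubstitutions compose: `t{𝕞 := s}{𝕞' := s'} = t{𝕞 := s{𝕞' := s'}}`, by induction on `t`.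
At a metavariable this needs that metasubstitution commutes with the ordinary substitution of
the parameters, which in turn rests on the fusion laws for renaming and substitution.
Lemma I is the instance in which the first metasubstitution keeps each `𝕟ⱼ` as its generic
expansion `𝕟ⱼ[y⃗ⱼ]`, which the second one then turns back into `sⱼ`. -/

namespace SO
namespace Term

variable {S : SOSig} {M M' M'' : Type} {mar : M → ℕ} {mar' : M' → ℕ} {mar'' : M'' → ℕ}

section Renamings

variable {n n' n'' p : ℕ}

@[simp] lemma extRen_castAdd (ρ : Fin n → Fin n') (j : Fin n) :
    extRen ρ p (Fin.castAdd p j) = Fin.castAdd p (ρ j) := by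
  simp [extRen]

@[simp] lemma extRen_natAdd (ρ : Fin n → Fin n') (j : Fin p) :
    extRen ρ p (Fin.natAdd n j) = Fin.natAdd n' j := by
  simp [extRen]

@[simp] lemma extRen_id : extRen (id : Fin n → Fin n) p = id := by
  funext x
  induction x using Fin.addCases <;> simp

lemma extRen_comp_castAdd (ρ : Fin n → Fin n') :
    extRen ρ p ∘ Fin.castAdd p = Fin.castAdd p ∘ ρ := by
  funext j
  simp

lemma extRen_comp (f : Fin n' → Fin n'') (g : Fin n → Fin n') :
    extRen f p ∘ extRen g p = extRen (f ∘ g) p := by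
  funext x
  induction x using Fin.addCases <;> simp

@[simp] lemma midWeak_castAdd {a : ℕ} (j : Fin n) :
    midWeak n p a (Fin.castAdd a j) = Fin.castAdd a (Fin.castAdd p j) := by
  simp [midWeak]

@[simp] lemma midWeak_natAdd {a : ℕ} (j : Fin a) :
    midWeak n p a (Fin.natAdd n j) = Fin.natAdd (n + p) j := by
  simp [midWeak]

lemma midWeak_eq_extRen (a : ℕ) : midWeak n p a = extRen (Fin.castAdd p) a := by
  funext x
  induction x using Fin.addCases <;> simp

lemma extRen_extRen_comp_midWeak {q : ℕ} (ρ : Fin n → Fin n') :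
    extRen (extRen ρ p) q ∘ midWeak n p q = midWeak n' p q ∘ extRen ρ q := by
  funext x
  induction x using Fin.addCases <;> simp

lemma midWeak_comp_midWeak {q a : ℕ} :
    midWeak (n + p) q a ∘ midWeak n p a = extRen (midWeak n p q) a ∘ midWeak n q a := by
  funext x
  induction x using Fin.addCases <;> simp

end Renamings

section Substitution

variable {n n' n'' p : ℕ}

@[simp] lemma extSub_castAdd (σ : Fin n → Term S M mar n') (j : Fin n) :
    extSub σ p (Fin.castAdd p j) = weaken p (σ j) := by
  simp [extSub]

@[simp] lemma extSub_natAdd (σ : Fin n → Term S M mar n') (j : Fin p) :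
    extSub σ p (Fin.natAdd n j) = .var (Fin.natAdd n' j) := by
  simp [extSub]

lemma rename_rename (t : Term S M mar n) (f : Fin n → Fin n') (g : Fin n' → Fin n'') :
    rename (rename t f) g = rename t (g ∘ f) := by
  induction t generalizing n' n'' with
  | var x => rfl
  | mvar m ts ih => simp only [rename, ih]
  | op o ts ih => simp only [rename, ih, extRen_comp]

lemma extSub_comp_extRen (σ : Fin n' → Term S M mar n'') (f : Fin n → Fin n') :
    extSub σ p ∘ extRen f p = extSub (σ ∘ f) p := by
  funext x
  induction x using Fin.addCases <;> simp

lemma subst_rename (t : Term S M mar n) (f : Fin n → Fin n') (σ : Fin n' → Term S M mar n'') :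
    subst (rename t f) σ = subst t (σ ∘ f) := by
  induction t generalizing n' n'' with
  | var x => rfl
  | mvar m ts ih => simp only [rename, subst, ih]
  | op o ts ih => simp only [rename, subst, ih, extSub_comp_extRen]

lemma rename_extSub (σ : Fin n → Term S M mar n') (g : Fin n' → Fin n'') :
    (fun x => rename (extSub σ p x) (extRen g p)) = extSub (fun x => rename (σ x) g) p := by
  funext x
  induction x using Fin.addCases with
  | left j => simp only [extSub_castAdd, weaken, rename_rename, extRen_comp_castAdd]
  | right j => simp [rename]

lemma rename_subst (t : Term S M mar n) (σ : Fin n → Term S M mar n') (g : Fin n' → Fin n'') :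
    rename (subst t σ) g = subst t (fun x => rename (σ x) g) := by
  induction t generalizing n' n'' with
  | var x => rfl
  | mvar m ts ih => simp only [rename, subst, ih]
  | op o ts ih => simp only [rename, subst, ih, rename_extSub]

@[simp] lemma extSub_var : extSub (.var : Fin n → Term S M mar n) p = .var := by
  funext x
  induction x using Fin.addCases <;> simp [weaken, rename]

@[simp] lemma subst_var (t : Term S M mar n) : subst t .var = t := by
  induction t with
  | var x => rfl
  | mvar m ts ih => simp only [subst, ih]
  | op o ts ih => simp only [subst, extSub_var, ih]

lemma subst_extSub (σ : Fin n → Term S M mar n') (σ' : Fin n' → Term S M mar n'') :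
    (fun x => subst (extSub σ p x) (extSub σ' p)) = extSub (fun x => subst (σ x) σ') p := by
  funext x
  induction x using Fin.addCases with
  | left j =>
      simp only [extSub_castAdd, weaken, subst_rename, rename_subst]
      congr 1
      funext y
      simp [weaken]
  | right j => simp [subst]

lemma subst_subst (t : Term S M mar n) (σ : Fin n → Term S M mar n')
    (σ' : Fin n' → Term S M mar n'') :
    subst (subst t σ) σ' = subst t (fun x => subst (σ x) σ') := by
  induction t generalizing n' n'' with
  | var x => rfl
  | mvar m ts ih => simp only [subst, ih]
  | op o ts ih => simp only [subst, ih, subst_extSub]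

end Substitution

section Metasubstitution

variable {n n' n'' : ℕ}

lemma msubst_rename (t : Term S M mar n) (f : Fin n → Fin n') (ρ : Fin n' → Fin n'')
    (s : ∀ m : M, Term S M' mar' (n'' + mar m)) :
    msubst (rename t f) ρ s = msubst t (ρ ∘ f) s := by
  induction t generalizing n' n'' with
  | var x => rfl
  | mvar m ts ih => simp only [rename, msubst, ih]
  | op o ts ih => simp only [rename, msubst, ih, extRen_comp]

lemma rename_msubst (t : Term S M mar n) (ρ : Fin n → Fin n')
    (s : ∀ m : M, Term S M' mar' (n' + mar m)) (g : Fin n' → Fin n'') :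
    rename (msubst t ρ s) g
      = msubst t (g ∘ ρ) (fun m => rename (s m) (extRen g (mar m))) := by
  induction t generalizing n' n'' with
  | var x => rfl
  | mvar m ts ih =>
      simp only [msubst, rename_subst, subst_rename]
      congr 1
      funext x
      induction x using Fin.addCases with
      | left j => simp [rename]
      | right j => simp [ih]
  | op o ts ih =>
      simp only [rename, msubst, ih, rename_rename, extRen_comp, extRen_extRen_comp_midWeak]

/- The induction needs the target context of `a` to vary independently: `σ₁ ∘ ρ₁` is the
metasubstituted `σ`, and `σ₁` restricts to the identity along `ι`. -/
lemma msubst_subst {na n₁ nb n₂ : ℕ} (a : Term S M mar na)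
    (σ : Fin na → Term S M mar n₁) (ρ : Fin n₁ → Fin n₂)
    (s : ∀ m : M, Term S M' mar' (n₂ + mar m))
    (ρ₁ : Fin na → Fin nb) (σ₁ : Fin nb → Term S M' mar' n₂) (ι : Fin n₂ → Fin nb)
    (hσ : ∀ x, msubst (σ x) ρ s = σ₁ (ρ₁ x)) (hι : ∀ j, σ₁ (ι j) = .var j) :
    msubst (subst a σ) ρ s
      = subst (msubst a ρ₁ (fun m => rename (s m) (extRen ι (mar m)))) σ₁ := by
  induction a generalizing n₁ nb n₂ with
  | var x => exact hσ x
  | mvar m ts ih =>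
      simp only [subst, msubst, subst_subst, subst_rename]
      congr 1
      funext x
      induction x using Fin.addCases with
      | left j => simp [subst, hι]
      | right j => simp [ih j σ ρ s ρ₁ σ₁ ι hσ hι]
  | op o ts ih =>
      simp only [subst, msubst]
      congr 1
      funext i
      rw [ih i (extSub σ _) (extRen ρ _) (fun m => rename (s m) (midWeak n₂ _ (mar m)))
          (extRen ρ₁ _) (extSub σ₁ _) (extRen ι _) ?_ ?_]
      · simp only [rename_rename, extRen_extRen_comp_midWeak]
      · intro x
        induction x using Fin.addCases with
        | left j =>
            rw [extSub_castAdd, extRen_castAdd, extSub_castAdd, ← hσ j]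
            simp only [weaken, msubst_rename, rename_msubst, midWeak_eq_extRen, extRen_comp_castAdd]
        | right j => simp [msubst]
      · intro j
        induction j using Fin.addCases with
        | left j => simp [weaken, hι, rename]
        | right j => simp

theorem msubst_msubst (t : Term S M mar n) (ρ : Fin n → Fin n')
    (s : ∀ m : M, Term S M' mar' (n' + mar m))
    (ρ' : Fin n' → Fin n'') (s' : ∀ m' : M', Term S M'' mar'' (n'' + mar' m')) :
    msubst (msubst t ρ s) ρ' s'
      = msubst t (ρ' ∘ ρ) (fun m =>
          msubst (s m) (extRen ρ' (mar m))
            (fun m' => rename (s' m') (midWeak n'' (mar m) (mar' m')))) := by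
  induction t generalizing n' n'' with
  | var x => rfl
  | mvar m ts ih =>
      simp only [msubst, midWeak_eq_extRen]
      rw [msubst_subst (s m) _ ρ' s' (extRen ρ' (mar m)) _ (Fin.castAdd (mar m)) ?hσ ?hι]
      case hσ =>
        intro x
        induction x using Fin.addCases with
        | left j => simp [msubst]
        | right j => simp [ih, midWeak_eq_extRen]
      case hι => simp
  | op o ts ih =>
      simp only [msubst, ih, extRen_comp, msubst_rename, rename_msubst, rename_rename,
        extRen_extRen_comp_midWeak, midWeak_comp_midWeak]

end Metasubstitution

section GenericExpansion

variable {n n' : ℕ}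

lemma rename_genMvar (ρ : Fin n → Fin n') (m : M) :
    rename (genMvar (S := S) (mar := mar) n m) (extRen ρ (mar m)) = genMvar n' m := by
  simp [genMvar, rename]

lemma msubst_genMvar (ρ : Fin n → Fin n') (m : M)
    (s : ∀ m : M, Term S M' mar' (n' + mar m)) :
    msubst (genMvar n m) (extRen ρ (mar m))
        (fun m' => rename (s m') (midWeak n' (mar m) (mar m'))) = s m := by
  simp only [genMvar, msubst, subst_rename]
  conv_rhs => rw [← subst_var (s m)]
  congr 1
  funext x
  induction x using Fin.addCases <;> simp

end GenericExpansion

end Term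
end SO

open SO SO.Term

/-- The metavariable context of `t` is the concatenation `𝕞⃗,𝕟⃗`, represented as a sum
`Fin k ⊕ Fin l`. In the first step `{𝕞ᵢ := (x⃗ᵢ)rᵢ}` the metavariables `𝕟ⱼ` are kept (sent to
their generic expansions `𝕟ⱼ[y⃗ⱼ]`), so the `rᵢ` live over a metavariable context containing the
`𝕟ⱼ` together with the ambient context `Θ` (represented as `Fin l ⊕ X`), while the `sⱼ` live
over `Θ` (represented as `X`). -/
theorem metasubstitution_lemma_I
    {S : SOSig} {k l : ℕ} {kar : Fin k → ℕ} {lar : Fin l → ℕ}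
    {X : Type} {xar : X → ℕ} {g : ℕ}
    (t : Term S (Fin k ⊕ Fin l) (Sum.elim kar lar) g)
    (r : ∀ i : Fin k, Term S (Fin l ⊕ X) (Sum.elim lar xar) (g + kar i))
    (s : ∀ j : Fin l, Term S X xar (g + lar j)) :
    msubst
        (msubst t id (sumElim' r (fun j => genMvar g (Sum.inl j))))
        id (sumElim' s (fun x => genMvar g x))
      = msubst t id
          (sumElim'
            (fun i => msubst (r i) id
              (sumElim' (fun j => rename (s j) (midWeak g (kar i) (lar j)))
                (fun x => genMvar (g + kar i) x)))
            s) := by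
  rw [msubst_msubst]
  congr 1
  funext m
  rcases m with i | j
  · simp only [sumElim', extRen_id]
    congr 1
    funext m'
    rcases m' with j | x
    · rfl
    · rw [midWeak_eq_extRen]
      exact rename_genMvar _ x
  · exact msubst_genMvar id (Sum.inl j) _
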